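/- Let p_1, …, p_M ∈ Z_q^r. Then the sum of Lee distances over all unordered pairs satisfies ∑_{i<j} d_L(p_i, p_j) ≤ S·M²·r/(2q), where S = q²/4 if q is even and S = (q²−1)/4 if q is odd. -/

import Mathlib

/-- Lee distance between two symbols of `ZMod q` (representatives in `{0,…,q-1}`). -/
def leeDistSym (q : ℕ) (x y : ZMod q) : ℕ := min (x - y).val (y - x).val

/-- Lee distance between two vectors over `ZMod q`. -/
def leeDist {q n : ℕ} (x y : Fin n → ZMod q) : ℕ := ∑ i, leeDistSym q (x i) (y i)

/-- Lee weight of a symbol of `ZMod q`. -/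
def leeWtSym (q : ℕ) (x : ZMod q) : ℕ := min x.val (q - x.val)

/-- Lee weight of a vector over `ZMod q`. -/
def leeWt {q n : ℕ} (x : Fin n → ZMod q) : ℕ := ∑ i, leeWtSym q (x i)

/-!
For `t ∈ ZMod q` let the arc `A_t = {t, t + 1, …, t + ⌊q/2⌋ - 1}`. Every symbol lies in exactly
`⌊q/2⌋` arcs, and two symbols at Lee distance `d` lie in exactly `⌊q/2⌋ - d` common arcs, so `d` is
the number of arcs containing the first symbol but not the second. Hence in one coordinate the sum
of the distances over ordered pairs is `∑ₜ sₜ (M - sₜ)`, where `sₜ` of the `M` symbols lie in `A_t`,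
and `∑ₜ sₜ = ⌊q/2⌋ M`; Cauchy–Schwarz on `∑ₜ sₜ²` bounds it by `⌊q/2⌋ ⌈q/2⌉ M² / q = S M² / q`.
-/

open Finset

theorem two_nsmul_sum_ite_lt {ι M : Type*} [Fintype ι] [LinearOrder ι] [AddCommMonoid M]
    (f : ι → ι → M) (hsymm : ∀ i j, f i j = f j i) (hdiag : ∀ i, f i i = 0) :
    2 • ∑ i, ∑ j, (if i < j then f i j else 0) = ∑ i, ∑ j, f i j := by
  have hsplit : ∀ i j, f i j = (if i < j then f i j else 0) + (if j < i then f j i else 0) := by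
    intro i j
    rcases lt_trichotomy i j with h | rfl | h
    · simp [h, h.not_gt]
    · simp [hdiag]
    · simp [h, h.not_gt, hsymm i j]
  rw [two_nsmul]
  conv_rhs => enter [2, i, 2, j]; rw [hsplit i j]
  rw [sum_congr rfl fun i _ => sum_add_distrib, sum_add_distrib,
    sum_comm (f := fun i j => if j < i then f j i else 0)]

theorem card_mul_sum_mul_sub_le {ι : Type*} [Fintype ι] (f : ι → ℕ) {M : ℕ}
    (hf : ∀ t, f t ≤ M) :
    Fintype.card ι * ∑ t, f t * (M - f t) ≤ (∑ t, f t) * (Fintype.card ι * M - ∑ t, f t) := by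
  have hcs := sq_sum_le_card_mul_sum_sq (s := univ) (f := f)
  have hle : ∑ t, f t ≤ Fintype.card ι * M := by
    simpa using sum_le_sum fun t (_ : t ∈ univ) => hf t
  zify [hf, hle] at hcs ⊢
  simp only [mul_sub, sum_sub_distrib, ← sum_mul, ← sq, card_univ] at *
  nlinarith [hcs]

theorem card_filter_range_lt_and_add_mod_lt {q m k : ℕ} (hm : 2 * m ≤ q) (hk : k < q) :
    #{j ∈ range q | j < m ∧ (j + k) % q < m} = m - min k (q - k) := by
  have hsplit : {j ∈ range q | j < m ∧ (j + k) % q < m} = range (m - k) ∪ Ico (q - k) m := by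
    ext j
    simp only [mem_filter, mem_range, mem_union, mem_Ico]
    constructor
    · rintro ⟨hj, hjm, hmod⟩
      rcases lt_or_ge (j + k) q with h | h
      · rw [Nat.mod_eq_of_lt h] at hmod; omega
      · rw [Nat.mod_eq_sub_mod h, Nat.mod_eq_of_lt (by omega)] at hmod; omega
    · rintro (h | h)
      · rw [Nat.mod_eq_of_lt (by omega)]; omega
      · rw [Nat.mod_eq_sub_mod (by omega), Nat.mod_eq_of_lt (by omega)]; omega
  rw [hsplit, card_union_of_disjoint (disjoint_left.2 fun j h₁ h₂ => by simp_all; omega),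
    card_range, Nat.card_Ico]
  omega

theorem div_two_mul_sub_div_two (q : ℕ) :
    q / 2 * (q - q / 2) = if Even q then q ^ 2 / 4 else (q ^ 2 - 1) / 4 := by
  rcases Nat.even_or_odd' q with ⟨c, rfl | rfl⟩
  · rw [if_pos (even_two_mul c), show (2 * c) ^ 2 = 4 * (c * c) by ring,
      show 2 * c / 2 = c by omega, show 2 * c - c = c by omega]
    omega
  · rw [if_neg (Nat.not_even_two_mul_add_one c),
      show (2 * c + 1) ^ 2 - 1 = 4 * (c * (c + 1)) by ring_nf; omega,
      show (2 * c + 1) / 2 = c by omega, show 2 * c + 1 - c = c + 1 by omega]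
    omega

namespace ZMod

variable {q : ℕ} [NeZero q]

theorem card_filter_val (P : ℕ → Prop) [DecidablePred P] :
    #{t : ZMod q | P t.val} = #{j ∈ range q | P j} :=
  card_nbij' val (↑) (fun t ht => by simp_all [val_lt])
    (fun j hj => by simp_all [val_natCast, Nat.mod_eq_of_lt]) (fun t _ => natCast_zmod_val t)
    (fun j hj => by simp_all [val_natCast, Nat.mod_eq_of_lt])

theorem card_filter_sub_left (a : ZMod q) (P : ZMod q → Prop) [DecidablePred P] :
    #{t | P (a - t)} = #{t | P t} :=
  card_nbij' (a - ·) (a - ·) (fun t ht => by simpa using ht)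
    (fun t ht => by simpa using ht) (fun t _ => sub_sub_cancel a t)
    (fun t _ => sub_sub_cancel a t)

end ZMod

theorem leeDistSym_comm (q : ℕ) (a b : ZMod q) : leeDistSym q a b = leeDistSym q b a :=
  min_comm _ _

theorem leeDist_comm {q n : ℕ} (x y : Fin n → ZMod q) : leeDist x y = leeDist y x :=
  sum_congr rfl fun i _ => leeDistSym_comm q (x i) (y i)

theorem leeDist_self {q n : ℕ} (x : Fin n → ZMod q) : leeDist x x = 0 := by
  simp [leeDist, leeDistSym]

section Arc

variable {q : ℕ} [NeZero q]

theorem leeDistSym_eq_min (a b : ZMod q) :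
    leeDistSym q a b = min (b - a).val (q - (b - a).val) := by
  rw [leeDistSym, ← neg_sub b a, ZMod.neg_val]
  split_ifs with h
  · simp [h]
  · exact min_comm _ _

theorem leeDistSym_le_div_two (a b : ZMod q) : leeDistSym q a b ≤ q / 2 := by
  rw [leeDistSym_eq_min]
  omega

variable (q) in
def arc (t : ZMod q) : Finset (ZMod q) := {a | (a - t).val < q / 2}

theorem mem_arc {a t : ZMod q} : a ∈ arc q t ↔ (a - t).val < q / 2 := by
  simp [arc]

theorem card_filter_mem_arc (a : ZMod q) : #{t | a ∈ arc q t} = q / 2 := by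
  simp only [mem_arc]
  rw [ZMod.card_filter_sub_left a (fun v => v.val < q / 2), ZMod.card_filter_val (· < q / 2),
    show {j ∈ range q | j < q / 2} = range (q / 2) by ext; simp; omega, card_range]

theorem card_filter_mem_arc_and_mem_arc (a b : ZMod q) :
    #{t | a ∈ arc q t ∧ b ∈ arc q t} = q / 2 - leeDistSym q a b := by
  have hshift : #{t | a ∈ arc q t ∧ b ∈ arc q t}
      = #{v : ZMod q | v.val < q / 2 ∧ (v + (b - a)).val < q / 2} := by
    rw [← ZMod.card_filter_sub_left a (fun v => v.val < q / 2 ∧ (v + (b - a)).val < q / 2)]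
    simp only [mem_arc, sub_add_sub_cancel']
  simp only [hshift, ZMod.val_add]
  rw [ZMod.card_filter_val (fun j => j < q / 2 ∧ (j + (b - a).val) % q < q / 2),
    card_filter_range_lt_and_add_mod_lt (by omega) (ZMod.val_lt _), leeDistSym_eq_min]

theorem leeDistSym_eq_card_filter_mem_arc_and_not_mem_arc (a b : ZMod q) :
    leeDistSym q a b = #{t | a ∈ arc q t ∧ b ∉ arc q t} := by
  have h := card_filter_add_card_filter_not (s := {t | a ∈ arc q t}) (fun t => b ∈ arc q t)
  simp only [filter_filter, card_filter_mem_arc, card_filter_mem_arc_and_mem_arc] at h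
  have := leeDistSym_le_div_two a b
  omega

variable {ι : Type*} [Fintype ι]

theorem sum_sum_leeDistSym_eq (x : ι → ZMod q) :
    ∑ i, ∑ j, leeDistSym q (x i) (x j) = ∑ t, #{i | x i ∈ arc q t} * #{i | x i ∉ arc q t} := by
  simp only [leeDistSym_eq_card_filter_mem_arc_and_not_mem_arc, card_filter, sum_mul_sum,
    ite_zero_mul_ite_zero, mul_one]
  rw [eq_comm, sum_comm]
  exact sum_congr rfl fun i _ => by rw [sum_comm]

theorem sum_card_filter_mem_arc (x : ι → ZMod q) :
    ∑ t, #{i | x i ∈ arc q t} = q / 2 * Fintype.card ι := by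
  simp only [card_filter]
  rw [sum_comm, sum_congr rfl fun i _ => by rw [← card_filter, card_filter_mem_arc]]
  simp [mul_comm]

theorem mul_sum_sum_leeDistSym_le (x : ι → ZMod q) :
    q * ∑ i, ∑ j, leeDistSym q (x i) (x j) ≤ q / 2 * (q - q / 2) * Fintype.card ι ^ 2 := by
  set s : ZMod q → ℕ := fun t => #{i | x i ∈ arc q t}
  have hcompl : ∀ t, #{i | x i ∉ arc q t} = Fintype.card ι - s t := fun t => by
    rw [← card_univ, ← card_filter_add_card_filter_not (s := univ) (fun i => x i ∈ arc q t)]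
    simp [s]
  calc q * ∑ i, ∑ j, leeDistSym q (x i) (x j)
      = Fintype.card (ZMod q) * ∑ t, s t * (Fintype.card ι - s t) := by
        rw [sum_sum_leeDistSym_eq, ZMod.card]
        simp only [hcompl, s]
    _ ≤ (∑ t, s t) * (Fintype.card (ZMod q) * Fintype.card ι - ∑ t, s t) :=
        card_mul_sum_mul_sub_le s fun t => (card_filter_le _ _).trans_eq card_univ
    _ = q / 2 * (q - q / 2) * Fintype.card ι ^ 2 := by
        rw [sum_card_filter_mem_arc, ZMod.card, ← Nat.sub_mul]
        ring

end Arc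

theorem sum_pairwise_lee_dist_le (q r M : ℕ) (hq : 2 ≤ q)
    (p : Fin M → Fin r → ZMod q) :
    2 * q * (∑ i : Fin M, ∑ j : Fin M, if i < j then leeDist (p i) (p j) else 0)
      ≤ (if Even q then q ^ 2 / 4 else (q ^ 2 - 1) / 4) * M ^ 2 * r := by
  have : NeZero q := ⟨by omega⟩
  have hpairs := two_nsmul_sum_ite_lt (fun i j => leeDist (p i) (p j))
    (fun i j => leeDist_comm _ _) (fun i => leeDist_self _)
  have hcoords : ∑ i, ∑ j, leeDist (p i) (p j)
      = ∑ k, ∑ i, ∑ j, leeDistSym q (p i k) (p j k) := by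
    simp only [leeDist]
    rw [eq_comm, sum_comm]
    exact sum_congr rfl fun i _ => by rw [sum_comm]
  calc 2 * q * (∑ i : Fin M, ∑ j : Fin M, if i < j then leeDist (p i) (p j) else 0)
      = ∑ k, q * ∑ i, ∑ j, leeDistSym q (p i k) (p j k) := by
        rw [mul_comm 2 q, mul_assoc, ← smul_eq_mul 2, hpairs, hcoords, mul_sum]
    _ ≤ ∑ _k : Fin r, q / 2 * (q - q / 2) * M ^ 2 :=
        sum_le_sum fun k _ => by simpa using mul_sum_sum_leeDistSym_le fun i => p i k
    _ = (if Even q then q ^ 2 / 4 else (q ^ 2 - 1) / 4) * M ^ 2 * r := by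
        simp [div_two_mul_sub_div_two, mul_comm]
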